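/- arXiv:1301.3252 — 4 statements merged into one kernel-verified Lean document; each statement's English description precedes it below -/
import Mathlib

section
/- Let n ≥ 2 and a_i = i for 1 ≤ i ≤ n, and let RC(k) = Σ_{1≤i≤k} Σ_{k<j≤n} (a_j − a_i). Then for every k with 1 ≤ k < n, k·(n − k)·(a_n − a_1) = (2·(n−1)/n)·RC(k). In particular, any constant δ such that k·(n−k)·(a_n − a_1) ≤ δ·RC(k) holds for some k with 1 ≤ k < n must satisfy δ ≥ 2·(n−1)/n. -/
lemma gaussIcc (k : ℕ) : ∑ i ∈ Finset.Icc 1 k, (i : ℝ) = k * (k + 1) / 2 := by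
  induction k with
  | zero => simp
  | succ m ih =>
    rw [Finset.sum_Icc_succ_top (by omega), ih]
    push_cast; ring

lemma keySum (n k : ℕ) (h2 : k ≤ n) :
    ∑ i ∈ Finset.Icc 1 k, ∑ j ∈ Finset.Icc (k + 1) n, ((j : ℝ) - (i : ℝ))
      = k * n * (n - k) / 2 := by
  have hcard : ((n + 1 - (k + 1) : ℕ) : ℝ) = (n : ℝ) - k := by
    have : n + 1 - (k + 1) = n - k := by omega
    rw [this, Nat.cast_sub h2]
  have hsdiff : Finset.Icc 1 n \ Finset.Icc 1 k = Finset.Icc (k + 1) n := by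
    ext a; simp only [Finset.mem_sdiff, Finset.mem_Icc]; omega
  have hsplit : ∑ j ∈ Finset.Icc (k + 1) n, (j : ℝ)
      = n * (n + 1) / 2 - k * (k + 1) / 2 := by
    have hsub : Finset.Icc 1 k ⊆ Finset.Icc 1 n := Finset.Icc_subset_Icc_right h2
    have := Finset.sum_sdiff (f := fun j : ℕ => (j : ℝ)) hsub
    rw [hsdiff, gaussIcc, gaussIcc] at this
    linarith
  have houter : ∀ i ∈ Finset.Icc 1 k,
      ∑ j ∈ Finset.Icc (k + 1) n, ((j : ℝ) - (i : ℝ))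
        = (n * (n + 1) / 2 - k * (k + 1) / 2) - ((n : ℝ) - k) * i := by
    intro i _
    rw [Finset.sum_sub_distrib, Finset.sum_const, hsplit, Nat.card_Icc,
      nsmul_eq_mul, hcard]
  rw [Finset.sum_congr rfl houter, Finset.sum_sub_distrib, Finset.sum_const,
    Nat.card_Icc, ← Finset.mul_sum, gaussIcc, nsmul_eq_mul]
  have : ((k + 1 - 1 : ℕ) : ℝ) = k := by simp
  rw [this]; ring

/-- For the equally spaced points a_i = i: the cut quality ratio equals 2(n-1)/n
for every cut k, hence any constant δ valid for some cut satisfies δ ≥ 2(n-1)/n. -/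
theorem stmt3 (n : ℕ) (hn : 2 ≤ n) :
    (∀ k : ℕ, 1 ≤ k → k < n →
      (k : ℝ) * ((n : ℝ) - (k : ℝ)) * ((n : ℝ) - 1)
        = (2 * ((n : ℝ) - 1) / (n : ℝ))
          * ∑ i ∈ Finset.Icc 1 k, ∑ j ∈ Finset.Icc (k + 1) n, ((j : ℝ) - (i : ℝ)))
    ∧ ∀ δ : ℝ,
        (∃ k : ℕ, 1 ≤ k ∧ k < n ∧
          (k : ℝ) * ((n : ℝ) - (k : ℝ)) * ((n : ℝ) - 1)
            ≤ δ * ∑ i ∈ Finset.Icc 1 k, ∑ j ∈ Finset.Icc (k + 1) n, ((j : ℝ) - (i : ℝ))) →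
        2 * ((n : ℝ) - 1) / (n : ℝ) ≤ δ := by
  have hn0 : (0 : ℝ) < n := by positivity
  constructor
  · intro k hk1 hkn
    rw [keySum n k (le_of_lt hkn)]
    field_simp
  · rintro δ ⟨k, hk1, hkn, hle⟩
    rw [keySum n k (le_of_lt hkn)] at hle
    have hk0 : (0 : ℝ) < k := by exact_mod_cast hk1
    have hnk : (0 : ℝ) < (n : ℝ) - k := by
      have : (k : ℝ) < n := by exact_mod_cast hkn
      linarith
    have hS : (0 : ℝ) < (k : ℝ) * n * ((n : ℝ) - k) / 2 := by positivity
    have h := (div_le_iff₀ hS).mpr hle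
    have heq : (k : ℝ) * ((n : ℝ) - k) * ((n : ℝ) - 1) / ((k : ℝ) * n * ((n : ℝ) - k) / 2)
        = 2 * ((n : ℝ) - 1) / n := by
      field_simp
    rw [heq] at h
    exact h
end

section
/- Let a_1 ≤ a_2 ≤ ... ≤ a_n be real numbers with n ≥ 2 and a_n > a_1. Then there exists k with 1 ≤ k < n such that k·(n − k)·(a_n − a_1) ≤ (210/59)·Σ_{1≤i≤k} Σ_{k<j≤n} (a_j − a_i). -/
/-- One-dimensional point-set cutting lemma: some cut k satisfies
k·(n-k)·(a_n - a_1) ≤ (210/59)·RC(k). -/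
theorem stmt7 (n : ℕ) (hn : 2 ≤ n) (a : ℕ → ℝ)
    (hmono : ∀ i j, 1 ≤ i → i ≤ j → j ≤ n → a i ≤ a j)
    (hdiam : a 1 < a n) :
    ∃ k : ℕ, 1 ≤ k ∧ k < n ∧
      (k : ℝ) * ((n : ℝ) - (k : ℝ)) * (a n - a 1)
        ≤ (210 / 59) * ∑ i ∈ Finset.Icc 1 k, ∑ j ∈ Finset.Icc (k + 1) n, (a j - a i) := by
  have h1n : 1 ≤ n := le_trans (by norm_num) hn
  set D : ℝ := a n - a 1 with hD
  have hDpos : 0 < D := sub_pos.mpr hdiam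
  -- S1 = RC(1), S2 = RC(n-1)
  set S1 : ℝ := ∑ j ∈ Finset.Icc 2 n, (a j - a 1) with hS1
  set S2 : ℝ := ∑ i ∈ Finset.Icc 1 (n-1), (a n - a i) with hS2
  have key : S1 + S2 = n * D := by
    have e1 : (∑ j ∈ Finset.Icc 1 n, (a j - a 1)) = (a 1 - a 1) + S1 := by
      rw [hS1, Finset.Icc_eq_cons_Ioc h1n, Finset.sum_cons, ← Finset.Icc_add_one_left_eq_Ioc]
      rfl
    have e2 : (∑ i ∈ Finset.Icc 1 n, (a n - a i)) = S2 + (a n - a n) := by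
      rw [hS2]
      have : n = (n - 1) + 1 := (Nat.succ_pred_eq_of_pos (by omega)).symm
      rw [this]
      rw [Finset.sum_Icc_succ_top (by omega)]
      congr 1
    have e3 : (∑ j ∈ Finset.Icc 1 n, (a j - a 1)) + (∑ i ∈ Finset.Icc 1 n, (a n - a i))
        = n * D := by
      rw [← Finset.sum_add_distrib]
      have : ∀ j ∈ Finset.Icc 1 n, (a j - a 1) + (a n - a j) = D := by
        intro j _; ring
      rw [Finset.sum_congr rfl this, Finset.sum_const, Nat.card_Icc]
      simp [nsmul_eq_mul]
    have := e3
    rw [e1, e2] at this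
    linarith
  by_cases hc : S2 ≤ S1
  · refine ⟨1, le_refl 1, by omega, ?_⟩
    have hrc : (∑ i ∈ Finset.Icc 1 1, ∑ j ∈ Finset.Icc (1 + 1) n, (a j - a i)) = S1 := by
      rw [Finset.Icc_self, Finset.sum_singleton]
    rw [hrc]
    have h2 : (n : ℝ) * D ≤ 2 * S1 := by linarith
    have hn2 : (2 : ℝ) ≤ (n : ℝ) := by exact_mod_cast hn
    push_cast
    nlinarith
  · refine ⟨n - 1, by omega, by omega, ?_⟩
    have hrc : (∑ i ∈ Finset.Icc 1 (n-1), ∑ j ∈ Finset.Icc ((n-1) + 1) n, (a j - a i)) = S2 := by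
      have hnn : (n - 1) + 1 = n := by omega
      rw [hnn]
      apply Finset.sum_congr rfl
      intro i _
      rw [Finset.Icc_self, Finset.sum_singleton]
    rw [hrc]
    have h2 : (n : ℝ) * D ≤ 2 * S2 := by linarith
    have hn2 : (2 : ℝ) ≤ (n : ℝ) := by exact_mod_cast hn
    have hcast : ((n - 1 : ℕ) : ℝ) = (n : ℝ) - 1 := by
      have : 1 ≤ n := h1n
      push_cast [this]
      ring
    rw [hcast]
    nlinarith
end

section
/- Let a_1 ≤ a_2 ≤ ... ≤ a_n be real numbers, and let [ℓ, r] ⊆ [a_1, a_n] be a closed interval with ℓ < r. Then there exists a real number z ∈ (ℓ, r] such that, letting k = |{i : a_i < z}|, we have 1 ≤ k < n and k·(n − k)·(r − ℓ) ≤ (210/59)·Σ_{1≤i≤k} Σ_{k<j≤n} (a_j − a_i). -/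
open Finset

/-- A downward-closed subset of `Icc 1 n` is an initial segment. -/
lemma filter_eq_Icc_card (n : ℕ) (p : ℕ → Prop) [DecidablePred p]
    (hdc : ∀ i j, 1 ≤ i → i ≤ j → j ≤ n → p j → p i) :
    (Finset.Icc 1 n).filter p = Finset.Icc 1 ((Finset.Icc 1 n).filter p).card := by
  set s := (Finset.Icc 1 n).filter p with hs
  have hsub : s ⊆ Finset.Icc 1 n := Finset.filter_subset _ _
  have hkn : s.card ≤ n := by
    have := Finset.card_le_card hsub
    simpa [Nat.card_Icc] using this
  refine (Finset.eq_of_subset_of_card_le ?_ ?_).symm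
  · intro i hi
    obtain ⟨hi1, hik⟩ := Finset.mem_Icc.mp hi
    by_contra hins
    have hlt : ∀ j ∈ s, j < i := by
      intro j hj
      by_contra hji
      push_neg at hji
      obtain ⟨hj1, hjn⟩ := Finset.mem_Icc.mp (hsub hj)
      have hpi := hdc i j hi1 hji hjn (Finset.mem_filter.mp hj).2
      exact hins (Finset.mem_filter.mpr
        ⟨Finset.mem_Icc.mpr ⟨hi1, le_trans hik hkn⟩, hpi⟩)
    have hsub2 : s ⊆ Finset.Ico 1 i := fun j hj =>
      Finset.mem_Ico.mpr ⟨(Finset.mem_Icc.mp (hsub hj)).1, hlt j hj⟩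
    have hcard := Finset.card_le_card hsub2
    rw [Nat.card_Ico] at hcard
    omega
  · simp [Nat.card_Icc]

/-- Constrained point-set cutting lemma: a good cut exists inside any
subinterval [ℓ, r] of [a_1, a_n]. -/
theorem stmt8 (n : ℕ) (hn : 2 ≤ n) (a : ℕ → ℝ)
    (hmono : ∀ i j, 1 ≤ i → i ≤ j → j ≤ n → a i ≤ a j)
    (l r : ℝ) (hlr : l < r) (hl : a 1 ≤ l) (hr : r ≤ a n) :
    ∃ z : ℝ, l < z ∧ z ≤ r ∧
      (let k := ((Finset.Icc 1 n).filter (fun i => a i < z)).card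
       1 ≤ k ∧ k < n ∧
        (k : ℝ) * ((n : ℝ) - (k : ℝ)) * (r - l)
          ≤ (210 / 59)
            * ∑ i ∈ Finset.Icc 1 k, ∑ j ∈ Finset.Icc (k + 1) n, (a j - a i)) := by
  classical
  set K1 := ((Finset.Icc 1 n).filter (fun i => a i ≤ l)).card with hK1def
  set K2 := ((Finset.Icc 1 n).filter (fun i => a i < r)).card with hK2def
  have h1 : (Finset.Icc 1 n).filter (fun i => a i ≤ l) = Finset.Icc 1 K1 :=
    filter_eq_Icc_card n _ (fun i j hi hij hj hpj => le_trans (hmono i j hi hij hj) hpj)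
  have h2 : (Finset.Icc 1 n).filter (fun i => a i < r) = Finset.Icc 1 K2 :=
    filter_eq_Icc_card n _ (fun i j hi hij hj hpj => lt_of_le_of_lt (hmono i j hi hij hj) hpj)
  -- basic cardinality facts
  have hK1pos : 1 ≤ K1 := by
    have h1mem : (1 : ℕ) ∈ (Finset.Icc 1 n).filter (fun i => a i ≤ l) :=
      Finset.mem_filter.mpr ⟨Finset.mem_Icc.mpr ⟨le_refl 1, le_trans one_le_two hn⟩, hl⟩
    exact Finset.card_pos.mpr ⟨1, h1mem⟩
  have hK1K2 : K1 ≤ K2 := by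
    apply Finset.card_le_card
    intro i hi
    obtain ⟨hin, hil⟩ := Finset.mem_filter.mp hi
    exact Finset.mem_filter.mpr ⟨hin, lt_of_le_of_lt hil hlr⟩
  have hK2n : K2 < n := by
    have hss : (Finset.Icc 1 n).filter (fun i => a i < r) ⊂ Finset.Icc 1 n := by
      refine ⟨Finset.filter_subset _ _, fun hsub => ?_⟩
      have hnmem : n ∈ Finset.Icc 1 n := Finset.mem_Icc.mpr ⟨le_trans one_le_two hn, le_refl n⟩
      have := (Finset.mem_filter.mp (hsub hnmem)).2
      exact absurd this (not_lt.mpr hr)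
    have := Finset.card_lt_card hss
    simpa [Nat.card_Icc] using this
  -- membership facts
  have Fa : ∀ i, 1 ≤ i → i ≤ K1 → a i ≤ l := by
    intro i hi1 hiK
    have : i ∈ (Finset.Icc 1 n).filter (fun i => a i ≤ l) := by
      rw [h1]; exact Finset.mem_Icc.mpr ⟨hi1, hiK⟩
    exact (Finset.mem_filter.mp this).2
  have Fb : ∀ i, K1 < i → i ≤ n → l < a i := by
    intro i hiK hin
    by_contra hcon
    push_neg at hcon
    have : i ∈ (Finset.Icc 1 n).filter (fun i => a i ≤ l) :=
      Finset.mem_filter.mpr ⟨Finset.mem_Icc.mpr ⟨le_trans hK1pos (le_of_lt hiK), hin⟩, hcon⟩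
    rw [h1] at this
    exact absurd (Finset.mem_Icc.mp this).2 (not_le.mpr hiK)
  have Fc : ∀ i, 1 ≤ i → i ≤ K2 → a i < r := by
    intro i hi1 hiK
    have : i ∈ (Finset.Icc 1 n).filter (fun i => a i < r) := by
      rw [h2]; exact Finset.mem_Icc.mpr ⟨hi1, hiK⟩
    exact (Finset.mem_filter.mp this).2
  have Fd : ∀ i, K2 < i → i ≤ n → r ≤ a i := by
    intro i hiK hin
    by_contra hcon
    push_neg at hcon
    have : i ∈ (Finset.Icc 1 n).filter (fun i => a i < r) :=
      Finset.mem_filter.mpr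
        ⟨Finset.mem_Icc.mpr ⟨le_trans (le_trans hK1pos hK1K2) (le_of_lt hiK), hin⟩, hcon⟩
    rw [h2] at this
    exact absurd (Finset.mem_Icc.mp this).2 (not_le.mpr hiK)
  -- the middle mass
  set s : ℝ := ∑ j ∈ Finset.Ioc K1 K2, (a j - l) with hsdef
  have hs0 : 0 ≤ s := by
    apply Finset.sum_nonneg
    intro j hj
    obtain ⟨hj1, hj2⟩ := Finset.mem_Ioc.mp hj
    have := Fb j hj1 (le_trans hj2 (le_of_lt hK2n))
    linarith
  have hcardIoc : (Finset.Ioc K1 K2).card = K2 - K1 := Nat.card_Ioc K1 K2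
  have hs1 : s ≤ ((K2 : ℝ) - (K1 : ℝ)) * (r - l) := by
    have hb : ∀ j ∈ Finset.Ioc K1 K2, a j - l ≤ r - l := by
      intro j hj
      obtain ⟨hj1, hj2⟩ := Finset.mem_Ioc.mp hj
      have := Fc j (le_trans hK1pos (le_of_lt hj1)) hj2
      linarith
    have := Finset.sum_le_card_nsmul _ _ _ hb
    rw [hcardIoc, nsmul_eq_mul] at this
    have hcast : ((K2 - K1 : ℕ) : ℝ) = (K2 : ℝ) - (K1 : ℝ) := by
      push_cast [Nat.cast_sub hK1K2]; ring
    rw [hcast] at this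
    exact this
  -- lower bound on S K1
  have hnK2cast : ((n - K2 : ℕ) : ℝ) = (n : ℝ) - (K2 : ℝ) := by
    push_cast [Nat.cast_sub (le_of_lt hK2n)]; ring
  have hS1 : (K1 : ℝ) * (s + ((n : ℝ) - (K2 : ℝ)) * (r - l))
      ≤ ∑ i ∈ Finset.Icc 1 K1, ∑ j ∈ Finset.Icc (K1 + 1) n, (a j - a i) := by
    have hinner : ∀ i ∈ Finset.Icc 1 K1,
        s + ((n : ℝ) - (K2 : ℝ)) * (r - l) ≤ ∑ j ∈ Finset.Icc (K1 + 1) n, (a j - a i) := by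
      intro i hi
      obtain ⟨hi1, hiK⟩ := Finset.mem_Icc.mp hi
      have hai : a i ≤ l := Fa i hi1 hiK
      have hstep : ∑ j ∈ Finset.Icc (K1 + 1) n, (min (a j) r - l)
          ≤ ∑ j ∈ Finset.Icc (K1 + 1) n, (a j - a i) := by
        apply Finset.sum_le_sum
        intro j hj
        have h1 := min_le_left (a j) r
        linarith
      have hsplit : (∑ j ∈ Finset.Ioc K1 K2, (min (a j) r - l))
          + (∑ j ∈ Finset.Ioc K2 n, (min (a j) r - l))
          = ∑ j ∈ Finset.Ioc K1 n, (min (a j) r - l) :=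
        Finset.sum_Ioc_consecutive _ hK1K2 (le_of_lt hK2n)
      have heq1 : ∑ j ∈ Finset.Ioc K1 K2, (min (a j) r - l) = s := by
        apply Finset.sum_congr rfl
        intro j hj
        obtain ⟨hj1, hj2⟩ := Finset.mem_Ioc.mp hj
        rw [min_eq_left (le_of_lt (Fc j (le_trans hK1pos (le_of_lt hj1)) hj2))]
      have heq2 : ∑ j ∈ Finset.Ioc K2 n, (min (a j) r - l)
          = ((n : ℝ) - (K2 : ℝ)) * (r - l) := by
        rw [Finset.sum_congr rfl (fun j hj => by
          obtain ⟨hj1, hj2⟩ := Finset.mem_Ioc.mp hj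
          rw [min_eq_right (Fd j hj1 hj2)])]
        rw [Finset.sum_const, Nat.card_Ioc, nsmul_eq_mul, hnK2cast]
      rw [Finset.Icc_add_one_left_eq_Ioc] at hstep
      rw [← hsplit, heq1, heq2] at hstep
      rw [Finset.Icc_add_one_left_eq_Ioc]
      exact hstep
    have := Finset.card_nsmul_le_sum _ _ _ hinner
    rw [Nat.card_Icc, nsmul_eq_mul] at this
    simpa using this
  -- lower bound on S K2
  have hS2 : ((n : ℝ) - (K2 : ℝ)) * ((K2 : ℝ) * (r - l) - s)
      ≤ ∑ i ∈ Finset.Icc 1 K2, ∑ j ∈ Finset.Icc (K2 + 1) n, (a j - a i) := by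
    have hinner : ∀ i ∈ Finset.Icc 1 K2,
        ((n : ℝ) - (K2 : ℝ)) * (r - max (a i) l) ≤ ∑ j ∈ Finset.Icc (K2 + 1) n, (a j - a i) := by
      intro i hi
      obtain ⟨hi1, hiK⟩ := Finset.mem_Icc.mp hi
      have hstep : ∑ j ∈ Finset.Icc (K2 + 1) n, (r - max (a i) l)
          ≤ ∑ j ∈ Finset.Icc (K2 + 1) n, (a j - a i) := by
        apply Finset.sum_le_sum
        intro j hj
        obtain ⟨hj1, hj2⟩ := Finset.mem_Icc.mp hj
        have h1 := Fd j (by omega) hj2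
        have h2 := le_max_left (a i) l
        linarith
      rw [Finset.sum_const, Nat.card_Icc, nsmul_eq_mul] at hstep
      have hc2 : ((n + 1 - (K2 + 1) : ℕ) : ℝ) = (n : ℝ) - (K2 : ℝ) := by
        rw [Nat.cast_sub (by omega)]
        push_cast
        ring
      rw [hc2] at hstep
      exact hstep
    have htot : ∑ i ∈ Finset.Icc 1 K2, ((n : ℝ) - (K2 : ℝ)) * (r - max (a i) l)
        ≤ ∑ i ∈ Finset.Icc 1 K2, ∑ j ∈ Finset.Icc (K2 + 1) n, (a j - a i) :=
      Finset.sum_le_sum hinner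
    have hsplit : (∑ i ∈ Finset.Ioc 0 K1, ((n : ℝ) - (K2 : ℝ)) * (r - max (a i) l))
        + (∑ i ∈ Finset.Ioc K1 K2, ((n : ℝ) - (K2 : ℝ)) * (r - max (a i) l))
        = ∑ i ∈ Finset.Ioc 0 K2, ((n : ℝ) - (K2 : ℝ)) * (r - max (a i) l) :=
      Finset.sum_Ioc_consecutive _ (Nat.zero_le K1) hK1K2
    have heq0 : Finset.Ioc 0 K2 = Finset.Icc 1 K2 := by
      rw [← Finset.Icc_add_one_left_eq_Ioc, zero_add]
    have heq0' : Finset.Ioc 0 K1 = Finset.Icc 1 K1 := by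
      rw [← Finset.Icc_add_one_left_eq_Ioc, zero_add]
    have heq1 : ∑ i ∈ Finset.Ioc 0 K1, ((n : ℝ) - (K2 : ℝ)) * (r - max (a i) l)
        = (K1 : ℝ) * (((n : ℝ) - (K2 : ℝ)) * (r - l)) := by
      rw [heq0']
      rw [Finset.sum_congr rfl (fun i hi => by
        obtain ⟨hi1, hi2⟩ := Finset.mem_Icc.mp hi
        rw [max_eq_right (Fa i hi1 hi2)])]
      rw [Finset.sum_const, Nat.card_Icc, nsmul_eq_mul]
      norm_num
    have heq2 : ∑ i ∈ Finset.Ioc K1 K2, ((n : ℝ) - (K2 : ℝ)) * (r - max (a i) l)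
        = ((n : ℝ) - (K2 : ℝ)) * (((K2 : ℝ) - (K1 : ℝ)) * (r - l) - s) := by
      rw [Finset.sum_congr rfl (fun i hi => by
        obtain ⟨hi1, hi2⟩ := Finset.mem_Ioc.mp hi
        have := Fb i hi1 (le_trans hi2 (le_of_lt hK2n))
        rw [max_eq_left (le_of_lt this)])]
      rw [← Finset.mul_sum]
      congr 1
      have : ∑ i ∈ Finset.Ioc K1 K2, (r - a i)
          = ∑ i ∈ Finset.Ioc K1 K2, ((r - l) - (a i - l)) := by
        apply Finset.sum_congr rfl; intro i _; ring
      rw [this, Finset.sum_sub_distrib, Finset.sum_const, hcardIoc, nsmul_eq_mul, ← hsdef]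
      have hcast : ((K2 - K1 : ℕ) : ℝ) = (K2 : ℝ) - (K1 : ℝ) := by
        push_cast [Nat.cast_sub hK1K2]; ring
      rw [hcast]
    rw [← heq0, ← hsplit, heq1, heq2] at htot
    calc ((n : ℝ) - (K2 : ℝ)) * ((K2 : ℝ) * (r - l) - s)
        = (K1 : ℝ) * (((n : ℝ) - (K2 : ℝ)) * (r - l))
          + ((n : ℝ) - (K2 : ℝ)) * (((K2 : ℝ) - (K1 : ℝ)) * (r - l) - s) := by ring
      _ ≤ _ := htot
  -- real-number abbreviations
  have hK1r : (1 : ℝ) ≤ (K1 : ℝ) := by exact_mod_cast hK1pos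
  have hK12r : (K1 : ℝ) ≤ (K2 : ℝ) := by exact_mod_cast hK1K2
  have hK2nr : (K2 : ℝ) ≤ (n : ℝ) - 1 := by
    have : K2 + 1 ≤ n := hK2n
    have := (Nat.cast_le (α := ℝ)).mpr this
    push_cast at this
    linarith
  have hd : (0 : ℝ) < r - l := by linarith
  -- the key disjunction: one of the two cuts works with constant 2
  have key : (K1 : ℝ) * ((n : ℝ) - (K1 : ℝ)) * (r - l)
        ≤ 2 * ∑ i ∈ Finset.Icc 1 K1, ∑ j ∈ Finset.Icc (K1 + 1) n, (a j - a i)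
      ∨ (K2 : ℝ) * ((n : ℝ) - (K2 : ℝ)) * (r - l)
        ≤ 2 * ∑ i ∈ Finset.Icc 1 K2, ∑ j ∈ Finset.Icc (K2 + 1) n, (a j - a i) := by
    by_contra hcon
    push_neg at hcon
    obtain ⟨hc1, hc2⟩ := hcon
    have hb1 : 2 * ((K1 : ℝ) * (s + ((n : ℝ) - (K2 : ℝ)) * (r - l)))
        < (K1 : ℝ) * ((n : ℝ) - (K1 : ℝ)) * (r - l) := by linarith
    have hb2 : 2 * (((n : ℝ) - (K2 : ℝ)) * ((K2 : ℝ) * (r - l) - s))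
        < (K2 : ℝ) * ((n : ℝ) - (K2 : ℝ)) * (r - l) := by linarith
    set A := (K1 : ℝ)
    set B := (K2 : ℝ)
    set N := (n : ℝ)
    set d := r - l
    have hA : (1 : ℝ) ≤ A := hK1r
    have hAB : A ≤ B := hK12r
    have hBN : B ≤ N - 1 := hK2nr
    have hNB : (0 : ℝ) < N - B := by linarith
    have hNA : (0 : ℝ) < N - A := by linarith
    have hApos : (0 : ℝ) < A := by linarith
    have hBpos : (0 : ℝ) < B := by linarith
    -- multiply hb1 by B(N-B) > 0 and hb2 by A(N-A) > 0 and add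
    have m1 : B * (N - B) * (2 * (A * (s + (N - B) * d)))
        < B * (N - B) * (A * (N - A) * d) :=
      mul_lt_mul_of_pos_left hb1 (mul_pos hBpos hNB)
    have m2 : A * (N - A) * (2 * ((N - B) * (B * d - s)))
        < A * (N - A) * (B * (N - B) * d) :=
      mul_lt_mul_of_pos_left hb2 (mul_pos hApos hNA)
    have hd' : (0 : ℝ) < d := hd
    have h2A : (0 : ℝ) < 2 * A * (N - B) := mul_pos (mul_pos two_pos hApos) hNB
    have hadd := add_lt_add m1 m2
    have h3 : 2 * A * (N - B) * (B * (N - B) * d) < 2 * A * (N - B) * ((N - A - B) * s) := by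
      ring_nf at hadd ⊢
      linarith
    have main : B * (N - B) * d < (N - A - B) * s := lt_of_mul_lt_mul_left h3 (le_of_lt h2A)
    rcases le_or_gt (N - A - B) 0 with hcase | hcase
    · have h4 : (N - A - B) * s ≤ 0 := mul_nonpos_of_nonpos_of_nonneg hcase hs0
      have h5 : (0 : ℝ) < B * (N - B) * d := mul_pos (mul_pos hBpos hNB) hd'
      linarith
    · have hsup : (N - A - B) * s ≤ (N - A - B) * (((K2 : ℝ) - (K1 : ℝ)) * (r - l)) :=
        mul_le_mul_of_nonneg_left hs1 (le_of_lt hcase)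
      have hid : (N - A - B) * (((K2 : ℝ) - (K1 : ℝ)) * (r - l))
          = B * (N - B) * d - A * (N - A) * d := by
        show (N - A - B) * ((B - A) * d) = B * (N - B) * d - A * (N - A) * d
        ring
      have h6 : (0 : ℝ) < A * (N - A) * d := mul_pos (mul_pos hApos hNA) hd'
      linarith
  -- nonnegativity of the sums
  have hSnn1 : 0 ≤ ∑ i ∈ Finset.Icc 1 K1, ∑ j ∈ Finset.Icc (K1 + 1) n, (a j - a i) := by
    refine le_trans ?_ hS1
    have h1 : (0:ℝ) ≤ ((n : ℝ) - (K2 : ℝ)) * (r - l) :=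
      mul_nonneg (by linarith) (le_of_lt hd)
    have h2 : (0:ℝ) ≤ s + ((n : ℝ) - (K2 : ℝ)) * (r - l) := by linarith
    exact mul_nonneg (by linarith) h2
  have hSnn2 : 0 ≤ ∑ i ∈ Finset.Icc 1 K2, ∑ j ∈ Finset.Icc (K2 + 1) n, (a j - a i) := by
    refine le_trans ?_ hS2
    have h1 : (0:ℝ) ≤ (K1 : ℝ) * (r - l) := mul_nonneg (by linarith) (le_of_lt hd)
    have h2 : ((K2 : ℝ) - (K1 : ℝ)) * (r - l) = (K2:ℝ) * (r-l) - (K1:ℝ)*(r-l) := by ring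
    have h3 : (0:ℝ) ≤ (K2 : ℝ) * (r - l) - s := by
      have := hs1
      rw [h2] at this
      linarith
    exact mul_nonneg (by linarith) h3
  rcases key with hk | hk
  · -- cut realizing K1 : z = min r (a (K1+1))
    have hK1n : K1 + 1 ≤ n := by omega
    have haK1 : l < a (K1 + 1) := Fb (K1 + 1) (Nat.lt_succ_self K1) hK1n
    refine ⟨min r (a (K1 + 1)), lt_min hlr haK1, min_le_left _ _, ?_⟩
    have hfeq : (Finset.Icc 1 n).filter (fun i => a i < min r (a (K1 + 1)))
        = (Finset.Icc 1 n).filter (fun i => a i ≤ l) := by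
      apply Finset.filter_congr
      intro x hx
      obtain ⟨hx1, hxn⟩ := Finset.mem_Icc.mp hx
      constructor
      · intro hxz
        by_contra hcon
        push_neg at hcon
        have hxK1 : K1 + 1 ≤ x := by
          by_contra hxx
          push_neg at hxx
          exact absurd (Fa x hx1 (by omega)) (not_le.mpr hcon)
        have : a (K1 + 1) ≤ a x := hmono (K1 + 1) x (by omega) hxK1 hxn
        have : min r (a (K1 + 1)) ≤ a x := le_trans (min_le_right _ _) this
        linarith
      · intro hxl
        exact lt_of_le_of_lt hxl (lt_min hlr haK1)
    intro k
    have hkval : k = K1 := by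
      show ((Finset.Icc 1 n).filter (fun i => a i < min r (a (K1 + 1)))).card = K1
      rw [hfeq]
    rw [hkval]
    refine ⟨hK1pos, by omega, ?_⟩
    linarith [hk, hSnn1]
  · -- cut realizing K2 : z = r
    refine ⟨r, hlr, le_refl r, ?_⟩
    intro k
    have hkval : k = K2 := hK2def.symm
    rw [hkval]
    refine ⟨le_trans hK1pos hK1K2, hK2n, ?_⟩
    linarith [hk, hSnn2]
end

section
/- Let a_1 ≤ a_2 ≤ ... ≤ a_n be real numbers with n ≥ 2, and suppose a_1 = a_2 = ... = a_k for some 1 ≤ k < n with a_k < a_{k+1}. Define RC(i) = Σ_{1≤j≤i} Σ_{i<m≤n} (a_m − a_j). Then for every i with 1 ≤ i ≤ k: RC(i) = (i/k)·RC(k), and k·(n − k)/RC(k) ≤ i·(n − i)/RC(i). That is, cutting after index k is at least as good as cutting inside the group of equal initial elements. -/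
/-- Cross-cut sum after k-th element. -/
noncomputable def RC (n : ℕ) (a : ℕ → ℝ) (k : ℕ) : ℝ :=
  ∑ i ∈ Finset.Icc 1 k, ∑ j ∈ Finset.Icc (k + 1) n, (a j - a i)

/-- If the first k elements coincide and a_k < a_{k+1}, then RC(i) = (i/k)·RC(k)
for 1 ≤ i ≤ k, and cutting at k is at least as good as cutting at i. -/
theorem stmt10 (n : ℕ) (hn : 2 ≤ n) (a : ℕ → ℝ)
    (hmono : ∀ i j, 1 ≤ i → i ≤ j → j ≤ n → a i ≤ a j)
    (k : ℕ) (hk1 : 1 ≤ k) (hkn : k < n)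
    (heq : ∀ i, 1 ≤ i → i ≤ k → a i = a 1) (hlt : a k < a (k + 1)) :
    ∀ i, 1 ≤ i → i ≤ k →
      RC n a i = ((i : ℝ) / (k : ℝ)) * RC n a k
      ∧ (k : ℝ) * ((n : ℝ) - (k : ℝ)) / RC n a k
          ≤ (i : ℝ) * ((n : ℝ) - (i : ℝ)) / RC n a i := by
  set S : ℝ := ∑ m ∈ Finset.Icc (k + 1) n, (a m - a 1) with hS
  have hkpos : (0 : ℝ) < k := by exact_mod_cast hk1
  -- S is positive
  have hSnonneg : ∀ m ∈ Finset.Icc (k + 1) n, (0 : ℝ) ≤ a m - a 1 := by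
    intro m hm
    simp only [Finset.mem_Icc] at hm
    have : a 1 ≤ a m := hmono 1 m le_rfl (by omega) hm.2
    linarith
  have hmem : k + 1 ∈ Finset.Icc (k + 1) n := by
    simp only [Finset.mem_Icc]; omega
  have hSpos : 0 < S := by
    have h1 : a (k + 1) - a 1 ≤ S := Finset.single_le_sum hSnonneg hmem
    have hk1eq : a k = a 1 := heq k hk1 le_rfl
    linarith
  have key : ∀ i, 1 ≤ i → i ≤ k → RC n a i = (i : ℝ) * S := by
    intro i hi1 hik
    unfold RC
    have hinner : ∀ j ∈ Finset.Icc 1 i,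
        ∑ m ∈ Finset.Icc (i + 1) n, (a m - a j) = S := by
      intro j hj
      simp only [Finset.mem_Icc] at hj
      rw [heq j hj.1 (hj.2.trans hik)]
      have h1 : Finset.Icc (i + 1) n = Finset.Ioc i n := by
        rw [← Finset.Icc_add_one_left_eq_Ioc]
      have h2 : Finset.Icc (k + 1) n = Finset.Ioc k n := by
        rw [← Finset.Icc_add_one_left_eq_Ioc]
      rw [hS, h1, h2,
        ← Finset.sum_Ioc_consecutive (fun m => a m - a 1) hik (le_of_lt hkn)]
      have hzero : ∑ m ∈ Finset.Ioc i k, (a m - a 1) = 0 := by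
        apply Finset.sum_eq_zero
        intro m hm
        simp only [Finset.mem_Ioc] at hm
        rw [heq m (by omega) hm.2]
        ring
      rw [hzero, zero_add]
    rw [Finset.sum_congr rfl hinner, Finset.sum_const, Nat.card_Icc]
    simp
  intro i hi1 hik
  have hRCi := key i hi1 hik
  have hRCk := key k hk1 le_rfl
  have hipos : (0 : ℝ) < i := by exact_mod_cast hi1
  constructor
  · rw [hRCi, hRCk]
    field_simp
  · rw [hRCi, hRCk]
    rw [mul_div_mul_left _ _ (ne_of_gt hkpos), mul_div_mul_left _ _ (ne_of_gt hipos)]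
    have hik' : (i : ℝ) ≤ k := by exact_mod_cast hik
    gcongr
end
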